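/- arXiv:1703.00674 — 3 statements merged into one kernel-verified Lean document; each statement's English description precedes it below -/
import Mathlib

section
/- (Sufficiency part of Proposition 1: feasibility of the flow constraints for the Asymmetric(a) system.) Let 0 < a < 1 and let λ be a real number with 0 ≤ λ < min{3a/(a+1), 2a}. Then there exist nonnegative real numbers ν_{s1,z'}, ν_{s1,z''}, ν_{s2,z'}, ν_{s2,z''} and a real ε > 0 such that: λ = ν_{s1,z'} + ν_{s2,z'}; ((1−a)/2)·ν_{s1,z'} + (1/2)·ν_{s2,z'} + (1−a)·ν_{s1,z''} = ν_{s1,z''}; ν_{s1,z'} + ν_{s1,z''} + ε ≤ 1; and ν_{s2,z'} + ν_{s2,z''} + ε ≤ 1. -/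
/-- Sufficiency part of Proposition 1: for the Asymmetric(a) system, any arrival rate
`lam < min (3a/(a+1)) (2a)` admits a feasible nonnegative flow with positive capacity slack. -/
theorem asymmetric_flow_feasibility (a lam : ℝ) (ha0 : 0 < a) (ha1 : a < 1)
    (hlam0 : 0 ≤ lam) (hlam : lam < min (3 * a / (a + 1)) (2 * a)) :
    ∃ ν1z' ν1z'' ν2z' ν2z'' ε : ℝ,
      0 ≤ ν1z' ∧ 0 ≤ ν1z'' ∧ 0 ≤ ν2z' ∧ 0 ≤ ν2z'' ∧ 0 < ε ∧
      lam = ν1z' + ν2z' ∧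
      (1 - a) / 2 * ν1z' + 1 / 2 * ν2z' + (1 - a) * ν1z'' = ν1z'' ∧
      ν1z' + ν1z'' + ε ≤ 1 ∧
      ν2z' + ν2z'' + ε ≤ 1 := by
  have hlam2a : lam < 2 * a := lt_of_lt_of_le hlam (min_le_right _ _)
  have hlam3 : lam < 3 * a / (a + 1) := lt_of_lt_of_le hlam (min_le_left _ _)
  have ha1pos : (0:ℝ) < a + 1 := by linarith
  have hlam3' : lam * (a + 1) < 3 * a := (lt_div_iff₀ ha1pos).mp hlam3
  set B : ℝ := (2 * a - lam) / a with hBdef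
  have hBpos : 0 < B := div_pos (by linarith) ha0
  have hmidlt : lam - 1 < B := by
    rw [hBdef, lt_div_iff₀ ha0]
    nlinarith
  set mid : ℝ := (lam - 1 + B) / 2 with hmiddef
  have hmidB : mid < B := by rw [hmiddef]; linarith
  have hmidgt : lam - 1 < mid := by rw [hmiddef]; linarith
  set ν1 : ℝ := max 0 (min lam mid) with hν1def
  have hν10 : 0 ≤ ν1 := le_max_left _ _
  have hν1lam : ν1 ≤ lam := max_le hlam0 (min_le_left _ _)
  have hν1B : ν1 < B := max_lt hBpos (lt_of_le_of_lt (min_le_right _ _) hmidB)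
  have hν1gt : lam - 1 < ν1 :=
    lt_of_lt_of_le (lt_min (by linarith) hmidgt) (le_max_right _ _)
  set ν2 : ℝ := lam - ν1 with hν2def
  have hν20 : 0 ≤ ν2 := by rw [hν2def]; linarith
  have hν21 : ν2 < 1 := by rw [hν2def]; linarith
  set ν1'' : ℝ := ((1 - a) * ν1 + ν2) / (2 * a) with hν1''def
  have h2a : (0:ℝ) < 2 * a := by linarith
  have hν1''0 : 0 ≤ ν1'' := by
    apply div_nonneg _ (le_of_lt h2a)
    nlinarith
  have haν1 : ν1 * a < 2 * a - lam := (lt_div_iff₀ ha0).mp hν1B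
  have hs1 : ν1 + ν1'' < 1 := by
    have h : ν1'' < 1 - ν1 := by
      rw [hν1''def, div_lt_iff₀ h2a, hν2def]
      nlinarith
    linarith
  refine ⟨ν1, ν1'', ν2, 0, min (1 - (ν1 + ν1'')) (1 - ν2), hν10, hν1''0, hν20, le_refl 0,
    lt_min (by linarith) (by linarith), by rw [hν2def]; ring, ?_, ?_, ?_⟩
  · rw [hν1''def]
    field_simp
    ring
  · have := min_le_left (1 - (ν1 + ν1'')) (1 - ν2)
    linarith
  · have := min_le_right (1 - (ν1 + ν1'')) (1 - ν2)
    linarith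
end

section
/- (Necessity part of Proposition 1: the flow constraints force λ ≤ min{3a/(a+1), 2a}.) Let 0 < a < 1 and λ ∈ ℝ. Suppose there exist nonnegative real numbers ν_{s1,z'}, ν_{s1,z''}, ν_{s2,z'}, ν_{s2,z''} such that: λ = ν_{s1,z'} + ν_{s2,z'}; ((1−a)/2)·ν_{s1,z'} + (1/2)·ν_{s2,z'} + (1−a)·ν_{s1,z''} = ν_{s1,z''}; ν_{s1,z'} + ν_{s1,z''} ≤ 1; and ν_{s2,z'} + ν_{s2,z''} ≤ 1. Then λ ≤ min{3a/(a+1), 2a}. -/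
/-- Necessity part of Proposition 1: for the Asymmetric(a) system, the flow feasibility
constraints force the arrival rate to satisfy `lam ≤ min (3a/(a+1)) (2a)`. -/
theorem asymmetric_flow_necessity (a lam : ℝ) (ha0 : 0 < a) (ha1 : a < 1)
    (ν1z' ν1z'' ν2z' ν2z'' : ℝ)
    (h1 : 0 ≤ ν1z') (h2 : 0 ≤ ν1z'') (h3 : 0 ≤ ν2z') (h4 : 0 ≤ ν2z'')
    (hflow1 : lam = ν1z' + ν2z')
    (hflow2 : (1 - a) / 2 * ν1z' + 1 / 2 * ν2z' + (1 - a) * ν1z'' = ν1z'')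
    (hcap1 : ν1z' + ν1z'' ≤ 1)
    (hcap2 : ν2z' + ν2z'' ≤ 1) :
    lam ≤ min (3 * a / (a + 1)) (2 * a) := by
  have key : (1 + a) * ν1z' + ν2z' ≤ 2 * a := by nlinarith
  have hν2 : ν2z' ≤ 1 := by linarith
  refine le_min ?_ ?_
  · rw [le_div_iff₀ (by linarith : (0:ℝ) < a + 1)]
    nlinarith
  · nlinarith
end

section
/- (Drift-negativity lemma used in the fluid-limit proof of Proposition 2.) Let C be a finite nonempty type with n = |C| elements, let ε ∈ (0,1), and let γ, Y : C → ℝ satisfy γ_c > 0 and Y_c > 0 for all c, Σ_c Y_c = 1, and Σ_c γ_c = 1 − ε. Then: (i) for every c, (γ_c − Y_c)·log(Y_c/γ_c) ≤ 0; (ii) there exists c ∈ C with Y_c − γ_c ≥ ε/n, and for this c, (γ_c − Y_c)·log(Y_c/γ_c) ≤ −(ε/n)·log(1 + ε/n); consequently (iii) for any weights w : C → ℝ with w_c ≥ w₀ > 0 for all c, Σ_c w_c (γ_c − Y_c) log(Y_c/γ_c) ≤ −w₀·(ε/n)·log(1 + ε/n) < 0. -/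
open Finset

/-- Drift-negativity lemma used in the fluid-limit proof of Proposition 2. -/
theorem drift_negativity {C : Type*} [Fintype C] [Nonempty C]
    (n : ℕ) (hn : n = Fintype.card C)
    (ε : ℝ) (hε0 : 0 < ε) (hε1 : ε < 1)
    (γ Y : C → ℝ) (hγ : ∀ c, 0 < γ c) (hY : ∀ c, 0 < Y c)
    (hYsum : ∑ c, Y c = 1) (hγsum : ∑ c, γ c = 1 - ε) :
    (∀ c, (γ c - Y c) * Real.log (Y c / γ c) ≤ 0) ∧
    (∃ c, ε / n ≤ Y c - γ c ∧
      (γ c - Y c) * Real.log (Y c / γ c) ≤ -(ε / n) * Real.log (1 + ε / n)) ∧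
    (∀ (w : C → ℝ) (w₀ : ℝ), 0 < w₀ → (∀ c, w₀ ≤ w c) →
      (∑ c, w c * ((γ c - Y c) * Real.log (Y c / γ c)))
          ≤ -w₀ * (ε / n) * Real.log (1 + ε / n) ∧
      -w₀ * (ε / n) * Real.log (1 + ε / n) < 0) := by
  classical
  have hn1 : 0 < n := hn ▸ Fintype.card_pos
  have hnR : (0:ℝ) < n := by exact_mod_cast hn1
  have hεn : 0 < ε / n := div_pos hε0 hnR
  have part1 : ∀ c, (γ c - Y c) * Real.log (Y c / γ c) ≤ 0 := by
    intro c
    rcases le_total (γ c) (Y c) with h | h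
    · apply mul_nonpos_of_nonpos_of_nonneg
      · linarith
      · exact Real.log_nonneg ((one_le_div (hγ c)).mpr h)
    · apply mul_nonpos_of_nonneg_of_nonpos
      · linarith
      · exact Real.log_nonpos (div_pos (hY c) (hγ c)).le ((div_le_one (hγ c)).mpr h)
  obtain ⟨c0, -, hc0⟩ : ∃ c ∈ Finset.univ, ε / n ≤ Y c - γ c := by
    apply Finset.exists_le_of_sum_le Finset.univ_nonempty
    have h1 : ∑ _c : C, ε / n = ε := by
      rw [Finset.sum_const, Finset.card_univ, ← hn, nsmul_eq_mul]
      field_simp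
    rw [h1, Finset.sum_sub_distrib, hYsum, hγsum]; linarith
  have hγ1 : γ c0 ≤ 1 := by
    have h2 := Finset.single_le_sum (f := γ) (fun c _ => (hγ c).le) (Finset.mem_univ c0)
    linarith
  have hlogpos : 0 < Real.log (1 + ε / n) := Real.log_pos (by linarith)
  have hlog : Real.log (1 + ε / n) ≤ Real.log (Y c0 / γ c0) := by
    apply Real.log_le_log (by linarith)
    rw [le_div_iff₀ (hγ c0)]
    nlinarith [mul_nonneg hεn.le (by linarith : (0:ℝ) ≤ 1 - γ c0)]
  have hbound : (γ c0 - Y c0) * Real.log (Y c0 / γ c0) ≤ -(ε/n) * Real.log (1 + ε/n) := by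
    calc (γ c0 - Y c0) * Real.log (Y c0 / γ c0)
        ≤ -(ε/n) * Real.log (Y c0 / γ c0) :=
          mul_le_mul_of_nonneg_right (by linarith) (le_trans hlogpos.le hlog)
      _ ≤ -(ε/n) * Real.log (1 + ε/n) :=
          mul_le_mul_of_nonpos_left hlog (by linarith)
  refine ⟨part1, ⟨c0, hc0, hbound⟩, ?_⟩
  intro w w₀ hw0 hw
  have hneg : 0 < (ε/n) * Real.log (1 + ε/n) := mul_pos hεn hlogpos
  constructor
  · have key : ∀ c ∈ Finset.univ, w c * ((γ c - Y c) * Real.log (Y c / γ c)) ≤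
        (if c = c0 then -w₀ * (ε/n) * Real.log (1 + ε/n) else 0) := by
      intro c _
      by_cases h : c = c0
      · subst h
        simp only [if_pos rfl]
        calc w c * ((γ c - Y c) * Real.log (Y c / γ c))
            ≤ w₀ * ((γ c - Y c) * Real.log (Y c / γ c)) :=
              mul_le_mul_of_nonpos_right (hw c) (part1 c)
          _ ≤ w₀ * (-(ε/n) * Real.log (1 + ε/n)) :=
              mul_le_mul_of_nonneg_left hbound hw0.le
          _ = -w₀ * (ε/n) * Real.log (1 + ε/n) := by ring
      · simp only [if_neg h]
        exact mul_nonpos_of_nonneg_of_nonpos (le_trans hw0.le (hw c)) (part1 c)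
    calc ∑ c, w c * ((γ c - Y c) * Real.log (Y c / γ c))
        ≤ ∑ c, (if c = c0 then -w₀ * (ε/n) * Real.log (1 + ε/n) else 0) :=
          Finset.sum_le_sum key
      _ = -w₀ * (ε/n) * Real.log (1 + ε/n) := by
          rw [Finset.sum_ite_eq' Finset.univ c0]
          simp
  · nlinarith [mul_pos hw0 hneg]
end
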